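/- arXiv:2509.20763 — 6 statements merged into one kernel-verified Lean document; each statement's English description precedes it below -/
import Mathlib

section
/- For every finite simple graph G on n ≥ 1 vertices, 2√n ≤ αod(G) + χso(G) ≤ n + 1. -/
open Finset

section OddIndepDefs

variable {V : Type*} [Fintype V] [DecidableEq V]

/-- `S` is an odd independent set in `G`: `S` is independent and every vertex outside `S`
has either no neighbor in `S` or an odd number of neighbors in `S`. -/
def IsOddIndepSet (G : SimpleGraph V) [DecidableRel G.Adj] (S : Finset V) : Prop :=
  (∀ u ∈ S, ∀ v ∈ S, ¬ G.Adj u v) ∧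
  ∀ v ∉ S, (S.filter fun u => G.Adj v u) = ∅ ∨ Odd (S.filter fun u => G.Adj v u).card

/-- The odd independence number: the largest size of an odd independent set. -/
noncomputable def oddIndepNum (G : SimpleGraph V) [DecidableRel G.Adj] : ℕ :=
  sSup {k | ∃ S : Finset V, IsOddIndepSet G S ∧ S.card = k}

/-- The independence number: the largest size of an independent set. -/
noncomputable def indepNum (G : SimpleGraph V) : ℕ :=
  sSup {k | ∃ S : Finset V, (∀ u ∈ S, ∀ v ∈ S, ¬ G.Adj u v) ∧ S.card = k}

/-- A strong odd coloring with `n` colors: a proper coloring such that for every vertex `v`,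
every color appearing in the open neighborhood of `v` appears there an odd number of times. -/
def IsStrongOddColoring (G : SimpleGraph V) [DecidableRel G.Adj] {n : ℕ} (c : V → Fin n) : Prop :=
  (∀ u v, G.Adj u v → c u ≠ c v) ∧
  ∀ v : V, ∀ k : Fin n,
    (univ.filter fun u => G.Adj v u ∧ c u = k) = ∅ ∨
    Odd (univ.filter fun u => G.Adj v u ∧ c u = k).card

/-- The strong odd chromatic number: minimum number of colors of a strong odd coloring. -/
noncomputable def strongOddChromNum (G : SimpleGraph V) [DecidableRel G.Adj] : ℕ :=
  sInf {n | ∃ c : V → Fin n, IsStrongOddColoring G c}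

/-- The chromatic number, as a natural number. -/
noncomputable def chromNum (G : SimpleGraph V) : ℕ :=
  sInf {n | ∃ c : V → Fin n, ∀ u v, G.Adj u v → c u ≠ c v}

/-- The square of a graph: two distinct vertices are adjacent iff they are at distance at most 2,
i.e. adjacent or having a common neighbor. -/
def graphSquare (G : SimpleGraph V) : SimpleGraph V where
  Adj u v := u ≠ v ∧ (G.Adj u v ∨ ∃ w, G.Adj u w ∧ G.Adj w v)
  symm := by
    constructor
    intro u v h
    refine ⟨h.1.symm, ?_⟩
    rcases h.2 with h' | ⟨w, h1, h2⟩
    · exact Or.inl h'.symm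
    · exact Or.inr ⟨w, h2.symm, h1.symm⟩
  loopless := ⟨fun v h => h.1 rfl⟩

instance (G : SimpleGraph V) [DecidableRel G.Adj] : DecidableRel (graphSquare G).Adj :=
  fun u v => inferInstanceAs (Decidable (u ≠ v ∧ (G.Adj u v ∨ ∃ w, G.Adj u w ∧ G.Adj w v)))

end OddIndepDefs

/-! A colouring is a strong odd colouring exactly when each of its colour classes is an odd
independent set. Hence the `χso` classes of an optimal colouring each have at most `αod` vertices,
so `n ≤ χso · αod` and AM–GM gives `2√n ≤ αod + χso`. Conversely, a maximum odd independent set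
as one class and singletons for the remaining `n - αod` vertices form a strong odd colouring with
`n - αod + 1` colours. -/
section OddIndependence

variable {V : Type*} (G : SimpleGraph V) [DecidableRel G.Adj]

lemma isOddIndepSet_of_card_le_one {S : Finset V} (hS : #S ≤ 1) : IsOddIndepSet G S := by
  refine ⟨fun u hu v hv huv => G.ne_of_adj huv (card_le_one.mp hS u hu v hv), fun v _ => ?_⟩
  have hle : #(S.filter fun u => G.Adj v u) ≤ 1 := (card_filter_le _ _).trans hS
  interval_cases h : #(S.filter fun u => G.Adj v u)
  · exact Or.inl (card_eq_zero.mp h)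
  · exact Or.inr odd_one

variable [Fintype V]

lemma bddAbove_oddIndepSet_cards :
    BddAbove {k | ∃ S : Finset V, IsOddIndepSet G S ∧ #S = k} :=
  ⟨Fintype.card V, by rintro k ⟨S, -, rfl⟩; exact S.card_le_univ⟩

lemma IsOddIndepSet.card_le_oddIndepNum {S : Finset V} (hS : IsOddIndepSet G S) :
    #S ≤ oddIndepNum G :=
  le_csSup (bddAbove_oddIndepSet_cards G) ⟨S, hS, rfl⟩

lemma exists_isOddIndepSet_card_eq_oddIndepNum :
    ∃ S : Finset V, IsOddIndepSet G S ∧ #S = oddIndepNum G := by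
  refine Nat.sSup_mem ?_ (bddAbove_oddIndepSet_cards G)
  exact ⟨0, ∅, isOddIndepSet_of_card_le_one G (by simp), rfl⟩

/-- For a vertex inside a class, the neighbourhood condition holds by independence; outside
the class, it is the oddness condition. -/
lemma isStrongOddColoring_iff {n : ℕ} (c : V → Fin n) :
    IsStrongOddColoring G c ↔ ∀ k, IsOddIndepSet G (univ.filter fun u => c u = k) := by
  have hfilter : ∀ v k, ((univ.filter fun u => c u = k).filter fun u => G.Adj v u) =
      univ.filter fun u => G.Adj v u ∧ c u = k := fun v k => by
    ext u; simp only [mem_filter, mem_univ, true_and, and_comm]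
  simp only [IsOddIndepSet, hfilter, mem_filter, mem_univ, true_and]
  constructor
  · rintro ⟨hproper, hodd⟩ k
    exact ⟨fun u hu v hv huv => hproper u v huv (hu.trans hv.symm), fun v _ => hodd v k⟩
  · intro h
    refine ⟨fun u v huv hc => (h (c u)).1 u rfl v hc.symm huv, fun v k => ?_⟩
    by_cases hv : c v = k
    · exact Or.inl (filter_eq_empty_iff.mpr fun u _ hu => (h k).1 v hv u hu.2 hu.1)
    · exact (h k).2 v hv

lemma strongOddChromNum_le {n : ℕ} {c : V → Fin n} (hc : IsStrongOddColoring G c) :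
    strongOddChromNum G ≤ n :=
  Nat.sInf_le ⟨c, hc⟩

lemma exists_isStrongOddColoring :
    ∃ c : V → Fin (strongOddChromNum G), IsStrongOddColoring G c := by
  have hinjective : IsStrongOddColoring G (Fintype.equivFin V) :=
    (isStrongOddColoring_iff G _).mpr fun _ => isOddIndepSet_of_card_le_one G <|
      card_le_one.mpr fun _ hu _ hv => (Fintype.equivFin V).injective
        ((mem_filter.mp hu).2.trans (mem_filter.mp hv).2.symm)
  exact Nat.sInf_mem (s := {n | ∃ c : V → Fin n, IsStrongOddColoring G c}) ⟨_, _, hinjective⟩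

lemma card_le_strongOddChromNum_mul_oddIndepNum :
    Fintype.card V ≤ strongOddChromNum G * oddIndepNum G := by
  obtain ⟨c, hc⟩ := exists_isStrongOddColoring G
  calc Fintype.card V = ∑ k, #(univ.filter fun u => c u = k) :=
        card_eq_sum_card_fiberwise fun u _ => mem_univ (c u)
    _ ≤ ∑ _k : Fin (strongOddChromNum G), oddIndepNum G := sum_le_sum fun k _ =>
        ((isStrongOddColoring_iff G c).mp hc k).card_le_oddIndepNum
    _ = strongOddChromNum G * oddIndepNum G := by simp

lemma strongOddChromNum_le_card_compl_add_one [DecidableEq V] {S : Finset V}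
    (hS : IsOddIndepSet G S) : strongOddChromNum G ≤ #Sᶜ + 1 := by
  let e : (Sᶜ : Finset V) ≃ Fin #Sᶜ := (Sᶜ).equivFin
  let c : V → Fin (#Sᶜ + 1) := fun v =>
    if h : v ∈ S then 0 else (e ⟨v, mem_compl.mpr h⟩).succ
  have hclass_zero : (univ.filter fun u => c u = 0) = S := by
    ext u; by_cases hu : u ∈ S <;> simp [c, hu, Fin.succ_ne_zero]
  refine strongOddChromNum_le G ((isStrongOddColoring_iff G c).mpr fun k => ?_)
  induction k using Fin.cases with
  | zero => rwa [hclass_zero]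
  | succ j =>
    refine isOddIndepSet_of_card_le_one G (card_le_one.mpr fun u hu w hw => ?_)
    simp only [mem_filter, mem_univ, true_and] at hu hw
    have hu' : u ∉ S := fun h => by simp [c, h, (Fin.succ_ne_zero j).symm] at hu
    have hw' : w ∉ S := fun h => by simp [c, h, (Fin.succ_ne_zero j).symm] at hw
    have hcuw := hu.trans hw.symm
    simp only [c, hu', hw', dite_false, Fin.succ_inj] at hcuw
    exact congrArg Subtype.val (e.injective hcuw)

lemma oddIndepNum_add_strongOddChromNum_le [DecidableEq V] :
    oddIndepNum G + strongOddChromNum G ≤ Fintype.card V + 1 := by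
  obtain ⟨S, hS, hcard⟩ := exists_isOddIndepSet_card_eq_oddIndepNum G
  have := strongOddChromNum_le_card_compl_add_one G hS
  rw [card_compl] at this
  have := S.card_le_univ
  omega

end OddIndependence

lemma Real.two_mul_sqrt_le_add {x a b : ℝ} (ha : 0 ≤ a) (hb : 0 ≤ b) (h : x ≤ a * b) :
    2 * √x ≤ a + b := by
  calc 2 * √x ≤ 2 * (√a * √b) := by rw [← Real.sqrt_mul ha]; gcongr
    _ ≤ √a ^ 2 + √b ^ 2 := by linarith [two_mul_le_add_sq √a √b]
    _ = a + b := by rw [Real.sq_sqrt ha, Real.sq_sqrt hb]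

theorem oddIndepNum_add_strongOddChromNum_bounds_general
    {V : Type*} [Fintype V] [DecidableEq V] (G : SimpleGraph V) [DecidableRel G.Adj] :
    2 * Real.sqrt (Fintype.card V) ≤ (oddIndepNum G + strongOddChromNum G : ℝ) ∧
    oddIndepNum G + strongOddChromNum G ≤ Fintype.card V + 1 := by
  refine ⟨Real.two_mul_sqrt_le_add (Nat.cast_nonneg _) (Nat.cast_nonneg _) ?_,
    oddIndepNum_add_strongOddChromNum_le G⟩
  rw [mul_comm]
  exact_mod_cast card_le_strongOddChromNum_mul_oddIndepNum G

/-- For every finite simple graph `G` on `n ≥ 1` vertices,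
`2√n ≤ αod(G) + χso(G) ≤ n + 1`. -/
theorem oddIndepNum_add_strongOddChromNum_bounds
    {V : Type*} [Fintype V] [DecidableEq V] (G : SimpleGraph V) [DecidableRel G.Adj]
    (hn : 1 ≤ Fintype.card V) :
    2 * Real.sqrt (Fintype.card V) ≤ (oddIndepNum G + strongOddChromNum G : ℝ) ∧
    oddIndepNum G + strongOddChromNum G ≤ Fintype.card V + 1 :=
  oddIndepNum_add_strongOddChromNum_bounds_general G
end

section
/- If G is a finite d-regular bipartite simple graph on n vertices with d odd, then αod(G) = α(G) = n/2, i.e. 2·αod(G) = n and 2·α(G) = n. -/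
open Finset

/-!
Double counting the edges leaving an independent set `S` of a `d`-regular graph with `d > 0`
gives `d·|S| ≤ d·|V \ S|`, so `|S| ≤ n/2`. In a bipartite `d`-regular graph both colour classes
are independent, hence both have exactly `n/2` vertices; and a vertex outside a colour class has
all of its `d` neighbours in it, so for odd `d` the colour class is even an odd independent set.
-/

namespace SimpleGraph

variable {V : Type*} [Fintype V] {G : SimpleGraph V}

theorem two_mul_card_le_of_isRegularOfDegree [DecidableEq V] [DecidableRel G.Adj] {d : ℕ}
    (hreg : G.IsRegularOfDegree d) (hd : 0 < d) {S : Finset V}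
    (hS : ∀ u ∈ S, ∀ v ∈ S, ¬ G.Adj u v) : 2 * #S ≤ Fintype.card V := by
  have hdouble : #S * d ≤ #Sᶜ * d := by
    refine card_mul_le_card_mul G.Adj (fun u hu => ?_) (fun v _ => ?_)
    · have hN : G.neighborFinset u ⊆ Sᶜ.bipartiteAbove G.Adj u := fun w hw => by
        rw [mem_neighborFinset] at hw
        exact (mem_bipartiteAbove G.Adj).2 ⟨mem_compl.2 fun hwS => hS u hu w hwS hw, hw⟩
      exact (hreg u).symm.le.trans (card_le_card hN)
    · have hN : S.bipartiteBelow G.Adj v ⊆ G.neighborFinset v := fun w hw =>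
        (mem_neighborFinset G v w).2 ((mem_bipartiteBelow G.Adj).1 hw).2.symm
      exact (card_le_card hN).trans (hreg v).le
  have := Nat.le_of_mul_le_mul_right hdouble hd
  have := card_add_card_compl S
  omega

theorem Coloring.not_adj_of_mem_filter_eq {α : Type*} [DecidableEq α] (C : G.Coloring α) (i : α) :
    ∀ u ∈ univ.filter (fun v => C v = i), ∀ v ∈ univ.filter (fun v => C v = i), ¬ G.Adj u v := by
  intro u hu v hv huv
  rw [mem_filter] at hu hv
  exact C.valid huv (hu.2.trans hv.2.symm)

theorem two_mul_card_colorClass_eq_of_isRegularOfDegree [DecidableEq V] [DecidableRel G.Adj]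
    {d : ℕ} (hreg : G.IsRegularOfDegree d) (hd : 0 < d) (C : G.Coloring (Fin 2)) :
    2 * #(univ.filter (fun v => C v = 0)) = Fintype.card V := by
  have hcompl : (univ.filter (fun v => C v = 0))ᶜ = univ.filter (fun v => C v = 1) := by
    ext v
    simp only [mem_compl, mem_filter, mem_univ, true_and]
    omega
  have h₀ := two_mul_card_le_of_isRegularOfDegree hreg hd (C.not_adj_of_mem_filter_eq 0)
  have h₁ := two_mul_card_le_of_isRegularOfDegree hreg hd (C.not_adj_of_mem_filter_eq 1)
  have := card_add_card_compl (univ.filter (fun v => C v = 0))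
  rw [hcompl] at this
  omega

theorem isOddIndepSet_of_neighborFinset_subset [DecidableRel G.Adj] {S : Finset V}
    (hS : ∀ u ∈ S, ∀ v ∈ S, ¬ G.Adj u v) (hodd : ∀ v ∉ S, Odd (G.degree v))
    (hN : ∀ v ∉ S, G.neighborFinset v ⊆ S) : IsOddIndepSet G S := by
  refine ⟨hS, fun v hv => Or.inr ?_⟩
  have hfilter : S.filter (G.Adj v) = G.neighborFinset v := by
    rw [neighborFinset_eq_filter, filter_congr_decidable]
    ext w
    simp only [mem_filter, mem_univ, true_and, and_iff_right_iff_imp]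
    exact fun hw => hN v hv ((mem_neighborFinset G v w).2 hw)
  rw [hfilter, card_neighborFinset_eq_degree]
  exact hodd v hv

theorem Coloring.neighborFinset_subset_filter_eq_zero [DecidableRel G.Adj]
    (C : G.Coloring (Fin 2)) {v : V} (hv : v ∉ univ.filter (fun v => C v = 0)) :
    G.neighborFinset v ⊆ univ.filter (fun v => C v = 0) := by
  intro w hw
  have hvw := C.valid ((mem_neighborFinset G v w).1 hw)
  simp only [mem_filter, mem_univ, true_and] at hv ⊢
  omega

end SimpleGraph

/-- If `G` is a finite `d`-regular bipartite simple graph on `n` vertices with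
`d` odd, then `αod(G) = α(G) = n/2`, i.e. `2·αod(G) = n` and `2·α(G) = n`. -/
theorem oddIndepNum_eq_half_card_of_regular_bipartite_odd
    {V : Type*} [Fintype V] [DecidableEq V]
    (G : SimpleGraph V) [DecidableRel G.Adj] (d : ℕ) (hd : Odd d)
    (hreg : G.IsRegularOfDegree d) (hbip : G.Colorable 2) :
    2 * oddIndepNum G = Fintype.card V ∧ 2 * indepNum G = Fintype.card V := by
  obtain ⟨C⟩ := hbip
  set A : Finset V := univ.filter (fun v => C v = 0)
  have hA_indep := C.not_adj_of_mem_filter_eq 0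
  have hA_card : 2 * #A = Fintype.card V :=
    SimpleGraph.two_mul_card_colorClass_eq_of_isRegularOfDegree hreg hd.pos C
  have hA_odd : IsOddIndepSet G A :=
    SimpleGraph.isOddIndepSet_of_neighborFinset_subset hA_indep (fun v _ => (hreg v).symm ▸ hd)
      (fun v hv => C.neighborFinset_subset_filter_eq_zero hv)
  have hle_A : ∀ S : Finset V, (∀ u ∈ S, ∀ v ∈ S, ¬ G.Adj u v) → #S ≤ #A := fun S hS => by
    have := SimpleGraph.two_mul_card_le_of_isRegularOfDegree hreg hd.pos hS
    omega
  have hodd : IsGreatest {k | ∃ S : Finset V, IsOddIndepSet G S ∧ #S = k} #A :=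
    ⟨⟨A, hA_odd, rfl⟩, by rintro _ ⟨S, hS, rfl⟩; exact hle_A S hS.1⟩
  have hindep : IsGreatest {k | ∃ S : Finset V, (∀ u ∈ S, ∀ v ∈ S, ¬ G.Adj u v) ∧ #S = k} #A :=
    ⟨⟨A, hA_indep, rfl⟩, by rintro _ ⟨S, hS, rfl⟩; exact hle_A S hS⟩
  rw [oddIndepNum, indepNum, hodd.csSup_eq, hindep.csSup_eq]
  exact ⟨hA_card, hA_card⟩
end

section
/- Let G be a finite Δ-regular simple graph on n vertices in which every two adjacent vertices have at least λ common neighbors. If Δ − λ is even, then (2Δ − λ − 1)·αod(G) ≤ (Δ − λ − 1)·n; if Δ − λ is odd, then (2Δ − λ)·αod(G) ≤ (Δ − λ)·n. -/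
open Finset

/-!
Let `S` be a maximum odd independent set and count the edges between `S` and its complement:
by regularity there are `Δ·|S|` of them. A vertex `v ∉ S` adjacent to some `u ∈ S` has its
`λ` common neighbours with `u` outside `S`, so `v` has at most `Δ - λ` neighbours in `S`; this
number is odd, hence at most `b`, the largest odd number `≤ Δ - λ`. Thus
`Δ·|S| ≤ b·(n - |S|)`, i.e. `(Δ + b)·|S| ≤ b·n`.
-/

namespace SimpleGraph

variable {V : Type*} {G : SimpleGraph V} [DecidableRel G.Adj] {S : Finset V}

theorem _root_.IsOddIndepSet.isIndepSet (hS : IsOddIndepSet G S) : G.IsIndepSet S :=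
  fun u hu v hv _ => hS.1 u hu v hv

variable [Fintype V]

theorem exists_isOddIndepSet_card_eq_oddIndepNum (G : SimpleGraph V) [DecidableRel G.Adj] :
    ∃ S : Finset V, IsOddIndepSet G S ∧ S.card = oddIndepNum G := by
  have hempty : IsOddIndepSet G ∅ := ⟨by simp, fun _ _ => Or.inl (by simp)⟩
  refine Nat.sSup_mem (s := {k | ∃ S : Finset V, IsOddIndepSet G S ∧ S.card = k})
    ⟨0, ∅, hempty, rfl⟩ ⟨Fintype.card V, ?_⟩
  rintro k ⟨S, -, rfl⟩
  exact S.card_le_univ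

theorem sum_card_filter_adj_compl_eq_sum_degree [DecidableEq V] (hS : G.IsIndepSet S) :
    ∑ v ∈ Sᶜ, #{u ∈ S | G.Adj v u} = ∑ u ∈ S, G.degree u := by
  refine (sum_card_bipartiteAbove_eq_sum_card_bipartiteBelow _).trans (sum_congr rfl fun u hu => ?_)
  rw [← card_neighborFinset_eq_degree]
  congr 1
  ext v
  simp only [bipartiteBelow, mem_filter, mem_compl, mem_neighborFinset, G.adj_comm u]
  exact ⟨And.right, fun hvu => ⟨fun hv => hS hu hv (G.ne_of_adj hvu).symm hvu.symm, hvu⟩⟩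

/-- The common neighbours of `v` and `u ∈ S` lie outside the independent set `S`, so they and
the neighbours of `v` in `S` are disjoint parts of the neighbourhood of `v`. -/
theorem card_filter_adj_add_card_common_le_degree (hS : G.IsIndepSet S) {u : V} (hu : u ∈ S)
    (v : V) :
    #{w ∈ S | G.Adj v w} + #{w | G.Adj v w ∧ G.Adj u w} ≤ G.degree v := by
  classical
  have hdisj : Disjoint {w ∈ S | G.Adj v w} ({w | G.Adj v w ∧ G.Adj u w} : Finset V) :=
    Finset.disjoint_left.2 fun w hwS hwc => by
      simp only [mem_filter, mem_univ, true_and] at hwS hwc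
      exact hS hu hwS.1 (G.ne_of_adj hwc.2) hwc.2
  rw [← card_union_of_disjoint hdisj, ← card_neighborFinset_eq_degree]
  refine card_le_card fun w hw => ?_
  rcases mem_union.1 hw with hw | hw <;> simp_all

theorem IsRegularOfDegree.add_mul_card_le {D b : ℕ} (hreg : G.IsRegularOfDegree D)
    (hS : G.IsIndepSet S) (hb : ∀ v ∉ S, #{u ∈ S | G.Adj v u} ≤ b) :
    (D + b) * #S ≤ b * Fintype.card V := by
  classical
  have hcount : D * #S ≤ #Sᶜ * b := calc
    D * #S = ∑ u ∈ S, G.degree u := by simp [hreg.degree_eq, mul_comm]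
    _ = ∑ v ∈ Sᶜ, #{u ∈ S | G.Adj v u} := (sum_card_filter_adj_compl_eq_sum_degree hS).symm
    _ ≤ #Sᶜ * b := sum_le_card_nsmul _ _ _ fun v hv => hb v (mem_compl.1 hv)
  have hn := S.card_compl_add_card
  nlinarith

theorem _root_.IsOddIndepSet.card_filter_adj_le {D lam b : ℕ} (hS : IsOddIndepSet G S)
    (hreg : G.IsRegularOfDegree D)
    (hcommon : ∀ x y : V, G.Adj x y → lam ≤ #{w | G.Adj x w ∧ G.Adj y w})
    (hb : ∀ k, Odd k → k + lam ≤ D → k ≤ b) (v : V) (hv : v ∉ S) :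
    #{u ∈ S | G.Adj v u} ≤ b := by
  rcases hS.2 v hv with hempty | hodd
  · simp [hempty]
  obtain ⟨u, hu⟩ := card_pos.1 hodd.pos
  rw [mem_filter] at hu
  have hle := card_filter_adj_add_card_common_le_degree hS.isIndepSet hu.1 v
  rw [hreg.degree_eq] at hle
  exact hb _ hodd ((Nat.add_le_add_left (hcommon v u hu.2) _).trans hle)

end SimpleGraph

theorem oddIndepNum_le_of_regular_common_neighbors_general
    {V : Type*} [Fintype V]
    (G : SimpleGraph V) [DecidableRel G.Adj] (D lam : ℕ)
    (hreg : G.IsRegularOfDegree D)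
    (hcommon : ∀ x y : V, G.Adj x y →
      lam ≤ (Finset.univ.filter fun w => G.Adj x w ∧ G.Adj y w).card) :
    (Even (D - lam) →
      (2 * D - lam - 1) * oddIndepNum G ≤ (D - lam - 1) * Fintype.card V) ∧
    (Odd (D - lam) →
      (2 * D - lam) * oddIndepNum G ≤ (D - lam) * Fintype.card V) := by
  obtain ⟨S, hS, hcard⟩ := SimpleGraph.exists_isOddIndepSet_card_eq_oddIndepNum G
  rw [← hcard]
  have key (b : ℕ) (hb : ∀ k, Odd k → k + lam ≤ D → k ≤ b) :
      (D + b) * #S ≤ b * Fintype.card V :=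
    hreg.add_mul_card_le hS.isIndepSet (hS.card_filter_adj_le hreg hcommon hb)
  constructor
  · rintro ⟨m, hm⟩
    calc (2 * D - lam - 1) * #S ≤ (D + (D - lam - 1)) * #S := Nat.mul_le_mul_right _ (by omega)
      _ ≤ (D - lam - 1) * Fintype.card V := key _ fun k ⟨j, hj⟩ hk => by omega
  · rintro ⟨m, hm⟩
    calc (2 * D - lam) * #S ≤ (D + (D - lam)) * #S := Nat.mul_le_mul_right _ (by omega)
      _ ≤ (D - lam) * Fintype.card V := key _ fun k _ hk => by omega

/-- Let `G` be a finite `Δ`-regular simple graph on `n` vertices in which every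
two adjacent vertices have at least `λ` common neighbors. If `Δ − λ` is even, then
`(2Δ − λ − 1)·αod(G) ≤ (Δ − λ − 1)·n`; if `Δ − λ` is odd, then `(2Δ − λ)·αod(G) ≤ (Δ − λ)·n`. -/
theorem oddIndepNum_le_of_regular_common_neighbors
    {V : Type*} [Fintype V] [DecidableEq V]
    (G : SimpleGraph V) [DecidableRel G.Adj] (D lam : ℕ)
    (hreg : G.IsRegularOfDegree D)
    (hcommon : ∀ x y : V, G.Adj x y →
      lam ≤ (Finset.univ.filter fun w => G.Adj x w ∧ G.Adj y w).card) :
    (Even (D - lam) →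
      (2 * D - lam - 1) * oddIndepNum G ≤ (D - lam - 1) * Fintype.card V) ∧
    (Odd (D - lam) →
      (2 * D - lam) * oddIndepNum G ≤ (D - lam) * Fintype.card V) :=
  oddIndepNum_le_of_regular_common_neighbors_general G D lam hreg hcommon
end

section
/- If S is an odd independent set in a finite simple graph G, then S contains no forbidden pair and no forcing pair; that is, there are no two vertices x, y ∈ S forming a forbidden pair, and no two vertices x, y ∈ S forming a forcing pair. -/
open Finset

/-- Two nonadjacent vertices `x, y` form a forbidden pair if they have a common neighbor `z`
with `N[z] ⊆ N[x] ∪ N[y]`. -/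
def ForbiddenPair {V : Type*} (G : SimpleGraph V) (x y : V) : Prop :=
  x ≠ y ∧ ¬ G.Adj x y ∧ ∃ z : V, G.Adj z x ∧ G.Adj z y ∧
    ∀ w : V, (w = z ∨ G.Adj z w) → (w = x ∨ G.Adj x w ∨ w = y ∨ G.Adj y w)

/-- Two nonadjacent common neighbors `x, y` of a vertex `z` form a forcing pair if every
`w ∈ N(z)` that is distinct from and nonadjacent to both `x` and `y` forms a forbidden pair
with `x` or with `y`. -/
def ForcingPair {V : Type*} (G : SimpleGraph V) (x y : V) : Prop :=
  x ≠ y ∧ ¬ G.Adj x y ∧ ∃ z : V, G.Adj z x ∧ G.Adj z y ∧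
    ∀ w : V, G.Adj z w → w ≠ x → w ≠ y → ¬ G.Adj w x → ¬ G.Adj w y →
      (ForbiddenPair G x w ∨ ForbiddenPair G y w)

theorem Finset.exists_ne_ne_of_odd_card {α : Type*} {T : Finset α} (hT : Odd T.card)
    {x y : α} (hx : x ∈ T) (hy : y ∈ T) (hxy : x ≠ y) : ∃ w ∈ T, w ≠ x ∧ w ≠ y := by
  classical
  by_contra! hcon
  have hT_eq : T = {x, y} := by
    refine Finset.Subset.antisymm (fun w hw => ?_) (Finset.insert_subset hx (by simpa using hy))
    by_cases hwx : w = x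
    · simp [hwx]
    · simp [hcon w hw hwx]
  rw [hT_eq, Finset.card_pair hxy] at hT
  exact Nat.not_odd_iff_even.mpr even_two hT

namespace IsOddIndepSet

variable {V : Type*} {G : SimpleGraph V} [DecidableRel G.Adj]
  {S : Finset V} {x y z : V}

theorem notMem_of_adj (hS : IsOddIndepSet G S) (hx : x ∈ S) (hzx : G.Adj z x) : z ∉ S :=
  fun hz => hS.1 z hz x hx hzx

/-- By independence `z ∉ S`, so `z` has an odd number of neighbours in `S`: they cannot be just
`x` and `y`. -/
theorem exists_third_neighbor (hS : IsOddIndepSet G S) (hx : x ∈ S) (hy : y ∈ S) (hxy : x ≠ y)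
    (hzx : G.Adj z x) (hzy : G.Adj z y) : ∃ w ∈ S, G.Adj z w ∧ w ≠ x ∧ w ≠ y := by
  have hxT : x ∈ S.filter (G.Adj z) := Finset.mem_filter.mpr ⟨hx, hzx⟩
  have hyT : y ∈ S.filter (G.Adj z) := Finset.mem_filter.mpr ⟨hy, hzy⟩
  have hodd : Odd (S.filter (G.Adj z)).card :=
    (hS.2 z (hS.notMem_of_adj hx hzx)).resolve_left (Finset.ne_empty_of_mem hxT)
  obtain ⟨w, hwT, hwx, hwy⟩ := Finset.exists_ne_ne_of_odd_card hodd hxT hyT hxy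
  obtain ⟨hwS, hzw⟩ := Finset.mem_filter.mp hwT
  exact ⟨w, hwS, hzw, hwx, hwy⟩

theorem not_forbiddenPair (hS : IsOddIndepSet G S) (hx : x ∈ S) (hy : y ∈ S) :
    ¬ ForbiddenPair G x y := by
  rintro ⟨hxy, -, z, hzx, hzy, hdom⟩
  obtain ⟨w, hwS, hzw, hwx, hwy⟩ := hS.exists_third_neighbor hx hy hxy hzx hzy
  rcases hdom w (Or.inr hzw) with h | h | h | h
  · exact hwx h
  · exact hS.1 x hx w hwS h
  · exact hwy h
  · exact hS.1 y hy w hwS h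

theorem not_forcingPair (hS : IsOddIndepSet G S) (hx : x ∈ S) (hy : y ∈ S) :
    ¬ ForcingPair G x y := by
  rintro ⟨hxy, -, z, hzx, hzy, hforce⟩
  obtain ⟨w, hwS, hzw, hwx, hwy⟩ := hS.exists_third_neighbor hx hy hxy hzx hzy
  rcases hforce w hzw hwx hwy (hS.1 w hwS x hx) (hS.1 w hwS y hy) with h | h
  · exact hS.not_forbiddenPair hx hwS h
  · exact hS.not_forbiddenPair hy hwS h

end IsOddIndepSet

theorem isOddIndepSet_no_forbidden_no_forcing_pair_general
    {V : Type*}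
    (G : SimpleGraph V) [DecidableRel G.Adj] (S : Finset V) (hS : IsOddIndepSet G S) :
    (∀ x ∈ S, ∀ y ∈ S, ¬ ForbiddenPair G x y) ∧
    (∀ x ∈ S, ∀ y ∈ S, ¬ ForcingPair G x y) :=
  ⟨fun _ hx _ hy => hS.not_forbiddenPair hx hy, fun _ hx _ hy => hS.not_forcingPair hx hy⟩

/-- An odd independent set contains no forbidden pair and no forcing pair. -/
theorem isOddIndepSet_no_forbidden_no_forcing_pair
    {V : Type*} [Fintype V] [DecidableEq V]
    (G : SimpleGraph V) [DecidableRel G.Adj] (S : Finset V) (hS : IsOddIndepSet G S) :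
    (∀ x ∈ S, ∀ y ∈ S, ¬ ForbiddenPair G x y) ∧
    (∀ x ∈ S, ∀ y ∈ S, ¬ ForcingPair G x y) :=
  isOddIndepSet_no_forbidden_no_forcing_pair_general G S hS
end

section
/- For every n ≥ 2, the half-graph H_{n,n} satisfies χso(H_{n,n}) = n + 1 and αod(H_{n,n}) = 2. Moreover, every odd independent set of H_{n,n} with more than one element has the form {v_i, u_j} with i < j. -/
open Finset

/-- Adjacency of the half-graph `H_{n,n}`: vertices `Sum.inl i` (the `u`'s) and `Sum.inr j`
(the `v`'s), with `u_i` adjacent to `v_j` iff `i ≤ j`. -/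
def halfAdj (n : ℕ) : Fin n ⊕ Fin n → Fin n ⊕ Fin n → Prop
  | Sum.inl i, Sum.inr j => i ≤ j
  | Sum.inr j, Sum.inl i => i ≤ j
  | _, _ => False

/-- The half-graph `H_{n,n}`. -/
def halfGraph (n : ℕ) : SimpleGraph (Fin n ⊕ Fin n) where
  Adj := halfAdj n
  symm := by
    constructor
    intro x y h
    cases x <;> cases y <;> simp only [halfAdj] at h ⊢ <;> exact h
  loopless := by
    constructor
    intro x h
    cases x <;> simp only [halfAdj] at h

instance (n : ℕ) : DecidableRel (halfGraph n).Adj := fun x y =>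
  match x, y with
  | Sum.inl i, Sum.inr j => inferInstanceAs (Decidable (i ≤ j))
  | Sum.inr j, Sum.inl i => inferInstanceAs (Decidable (i ≤ j))
  | Sum.inl _, Sum.inl _ => inferInstanceAs (Decidable False)
  | Sum.inr _, Sum.inr _ => inferInstanceAs (Decidable False)

/-!
In `H_{n,n}` the neighbours of `v_b` in a set `S` are the `u_i ∈ S` with `i ≤ b`, and those of
`u_p` are the `v_j ∈ S` with `j ≥ p`. If `S` contains two `u`'s, taking `b` to be the second
smallest of their indices gives a vertex `v_b ∉ S` with exactly two neighbours in `S`; dually for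
two `v`'s. So an odd independent set meets each side at most once, which leaves only the pairs
`{v_i, u_j}` with `i < j`. The same count applied to a colour class shows that a strong odd
colouring gives the `v_j` pairwise distinct colours, all different from the colour of `u_0`; the
colouring `u_i ↦ i`, `v_j ↦ j + 1` shows that `n + 1` colours suffice.
-/

open Sum

namespace Finset

variable {α : Type*} [LinearOrder α]

lemma exists_mem_card_filter_le_eq_two {s : Finset α} (hs : 2 ≤ #s) :
    ∃ b ∈ s, #(s.filter (· ≤ b)) = 2 := by
  have hs₀ : s.Nonempty := card_pos.mp (by omega)
  set a := s.min' hs₀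
  have ha : a ∈ s := min'_mem s hs₀
  have hs₁ : (s.erase a).Nonempty := card_pos.mp (by rw [card_erase_of_mem ha]; omega)
  set b := (s.erase a).min' hs₁
  have hb : b ∈ s.erase a := min'_mem _ hs₁
  have hab : a < b := (min'_le s b (mem_of_mem_erase hb)).lt_of_ne (ne_of_mem_erase hb).symm
  refine ⟨b, mem_of_mem_erase hb, ?_⟩
  suffices s.filter (· ≤ b) = {a, b} by rw [this, card_pair hab.ne]
  ext x
  simp only [mem_filter, mem_insert, mem_singleton]
  constructor
  · rintro ⟨hx, hxb⟩
    by_contra! hxab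
    exact hxab.2 (hxb.antisymm ((s.erase a).min'_le x (mem_erase.mpr ⟨hxab.1, hx⟩)))
  · rintro (rfl | rfl)
    exacts [⟨ha, hab.le⟩, ⟨mem_of_mem_erase hb, le_rfl⟩]

lemma exists_mem_card_filter_ge_eq_two {s : Finset α} (hs : 2 ≤ #s) :
    ∃ b ∈ s, #(s.filter (b ≤ ·)) = 2 :=
  exists_mem_card_filter_le_eq_two (α := αᵒᵈ) hs

lemma eq_empty_or_odd_card_of_card_le_one {β : Type*} {s : Finset β} (h : #s ≤ 1) :
    s = ∅ ∨ Odd #s := by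
  rcases Nat.le_one_iff_eq_zero_or_eq_one.mp h with h | h
  · exact Or.inl (card_eq_zero.mp h)
  · exact Or.inr (h ▸ odd_one)

end Finset

section OddIndependence

variable {V : Type*} {G : SimpleGraph V} [DecidableRel G.Adj]

lemma IsOddIndepSet.card_filter_adj_ne_two {S : Finset V} (hS : IsOddIndepSet G S) {v : V}
    (hv : v ∉ S) : #(S.filter (G.Adj v)) ≠ 2 := by
  rcases hS.2 v hv with h | h
  · simp [h]
  · rintro h2
    rw [h2] at h
    exact Nat.not_odd_iff_even.mpr even_two h

lemma IsStrongOddColoring.card_filter_ne_two [Fintype V] {m : ℕ} {c : V → Fin m}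
    (hc : IsStrongOddColoring G c) (v : V) (k : Fin m) :
    #(univ.filter fun u => G.Adj v u ∧ c u = k) ≠ 2 := by
  rcases hc.2 v k with h | h
  · simp [h]
  · rintro h2
    rw [h2] at h
    exact Nat.not_odd_iff_even.mpr even_two h

lemma isOddIndepSet_of_card_filter_adj_le_one {S : Finset V}
    (hind : ∀ u ∈ S, ∀ v ∈ S, ¬ G.Adj u v) (h : ∀ v, #(S.filter (G.Adj v)) ≤ 1) :
    IsOddIndepSet G S :=
  ⟨hind, fun v _ => eq_empty_or_odd_card_of_card_le_one (h v)⟩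

lemma isStrongOddColoring_of_injOn [Fintype V] {m : ℕ} {c : V → Fin m}
    (hproper : ∀ u v, G.Adj u v → c u ≠ c v) (hinj : ∀ v, Set.InjOn c (G.neighborSet v)) :
    IsStrongOddColoring G c := by
  refine ⟨hproper, fun v k => eq_empty_or_odd_card_of_card_le_one (card_le_one.mpr ?_)⟩
  simp only [mem_filter, mem_univ, true_and]
  rintro a ⟨hva, rfl⟩ b ⟨hvb, hab⟩
  exact hinj v hva hvb hab.symm

end OddIndependence

namespace halfGraph

variable {n : ℕ}

@[simp] lemma adj_inl_inr (i j : Fin n) : (halfGraph n).Adj (inl i) (inr j) ↔ i ≤ j := Iff.rfl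
@[simp] lemma adj_inr_inl (i j : Fin n) : (halfGraph n).Adj (inr j) (inl i) ↔ i ≤ j := Iff.rfl
@[simp] lemma not_adj_inl_inl (i j : Fin n) : ¬ (halfGraph n).Adj (inl i) (inl j) := id
@[simp] lemma not_adj_inr_inr (i j : Fin n) : ¬ (halfGraph n).Adj (inr i) (inr j) := id

lemma filter_adj_inl (S : Finset (Fin n ⊕ Fin n)) (p : Fin n) :
    S.filter ((halfGraph n).Adj (inl p)) = (S.toRight.filter (p ≤ ·)).map .inr := by
  ext (x | x) <;> simp

lemma filter_adj_inr (S : Finset (Fin n ⊕ Fin n)) (q : Fin n) :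
    S.filter ((halfGraph n).Adj (inr q)) = (S.toLeft.filter (· ≤ q)).map .inl := by
  ext (x | x) <;> simp

lemma card_toLeft_le_one {S : Finset (Fin n ⊕ Fin n)} (hS : IsOddIndepSet (halfGraph n) S) :
    #S.toLeft ≤ 1 := by
  by_contra! h
  obtain ⟨b, hb, hcard⟩ := exists_mem_card_filter_le_eq_two h
  have hbS : inr b ∉ S := fun hb' => hS.1 _ (mem_toLeft.mp hb) _ hb' le_rfl
  exact hS.card_filter_adj_ne_two hbS (by rw [filter_adj_inr, card_map, hcard])

lemma card_toRight_le_one {S : Finset (Fin n ⊕ Fin n)} (hS : IsOddIndepSet (halfGraph n) S) :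
    #S.toRight ≤ 1 := by
  by_contra! h
  obtain ⟨b, hb, hcard⟩ := exists_mem_card_filter_ge_eq_two h
  have hbS : inl b ∉ S := fun hb' => hS.1 _ hb' _ (mem_toRight.mp hb) le_rfl
  exact hS.card_filter_adj_ne_two hbS (by rw [filter_adj_inl, card_map, hcard])

lemma eq_pair_of_isOddIndepSet {S : Finset (Fin n ⊕ Fin n)} (hS : IsOddIndepSet (halfGraph n) S)
    (hcard : 1 < #S) : ∃ i j : Fin n, i < j ∧ S = {inr i, inl j} := by
  have hsum := card_toLeft_add_card_toRight (u := S)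
  have hl := card_toLeft_le_one hS
  have hr := card_toRight_le_one hS
  obtain ⟨j, hj⟩ := card_eq_one.mp (by omega : #S.toLeft = 1)
  obtain ⟨i, hi⟩ := card_eq_one.mp (by omega : #S.toRight = 1)
  have hS_eq : S = {inr i, inl j} := by
    rw [eq_disjSum_iff.mpr ⟨hj, hi⟩]
    ext (x | x) <;> simp
  have hij : ¬ j ≤ i := hS.1 (inl j) (by simp [hS_eq]) (inr i) (by simp [hS_eq])
  exact ⟨i, j, not_le.mp hij, hS_eq⟩

lemma isOddIndepSet_pair {i j : Fin n} (hij : i < j) :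
    IsOddIndepSet (halfGraph n) {inr i, inl j} := by
  refine isOddIndepSet_of_card_filter_adj_le_one ?_ fun v => card_le_one.mpr ?_
  · simp [hij]
  · rintro a ha b hb
    rcases v with _ | _ <;> simp only [mem_filter, mem_insert, mem_singleton] at ha hb <;>
      rcases ha with ⟨rfl | rfl, ha⟩ <;> rcases hb with ⟨rfl | rfl, hb⟩ <;> simp_all

def strongOddColoring (n : ℕ) : Fin n ⊕ Fin n → Fin (n + 1) :=
  Sum.elim Fin.castSucc Fin.succ

lemma isStrongOddColoring_strongOddColoring :
    IsStrongOddColoring (halfGraph n) (strongOddColoring n) := by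
  refine isStrongOddColoring_of_injOn ?_ ?_
  · rintro (i | j) (i' | j') h <;> simp [strongOddColoring, Fin.ext_iff] at h ⊢
    all_goals omega
  · rintro (i | j) (x | x) hx (y | y) hy hxy <;> simp_all [strongOddColoring]

lemma succ_le_of_isStrongOddColoring (hn : 0 < n) {m : ℕ} {c : Fin n ⊕ Fin n → Fin m}
    (hc : IsStrongOddColoring (halfGraph n) c) : n + 1 ≤ m := by
  have hinr : Function.Injective (c ∘ inr) := by
    intro j k hjk
    by_contra hne
    set C := univ.filter fun u => c u = c (inr j)
    have hC : 2 ≤ #C.toRight := by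
      have : {j, k} ⊆ C.toRight := by simpa [insert_subset_iff, C] using hjk.symm
      exact (card_pair hne).symm.le.trans (card_le_card this)
    obtain ⟨p, -, hp⟩ := exists_mem_card_filter_ge_eq_two hC
    have hclass : univ.filter (fun u => (halfGraph n).Adj (inl p) u ∧ c u = c (inr j)) =
        C.filter ((halfGraph n).Adj (inl p)) := by
      ext u
      simp [C, and_comm]
    exact hc.card_filter_ne_two (inl p) _ (by rw [hclass, filter_adj_inl, card_map, hp])
  have hinl (j : Fin n) : c (inl ⟨0, hn⟩) ≠ c (inr j) := hc.1 _ _ (Nat.zero_le _)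
  have hinj : Function.Injective fun o : Option (Fin n) => o.elim (c (inl ⟨0, hn⟩)) (c ∘ inr) := by
    rintro (_ | j) (_ | k) h <;> simp only [Option.elim] at h
    · rfl
    · exact absurd h (hinl k)
    · exact absurd h.symm (hinl j)
    · rw [hinr h]
  simpa using Fintype.card_le_of_injective _ hinj

end halfGraph

/-- For every `n ≥ 2`, the half-graph `H_{n,n}` satisfies `χso = n + 1` and
`αod = 2`; moreover every odd independent set with more than one element has the form
`{v_i, u_j}` with `i < j`. -/
theorem halfGraph_strongOddChromNum_oddIndepNum (n : ℕ) (hn : 2 ≤ n) :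
    strongOddChromNum (halfGraph n) = n + 1 ∧
    oddIndepNum (halfGraph n) = 2 ∧
    ∀ S : Finset (Fin n ⊕ Fin n), IsOddIndepSet (halfGraph n) S → 1 < S.card →
      ∃ i j : Fin n, i < j ∧ S = {Sum.inr i, Sum.inl j} := by
  refine ⟨?_, ?_, fun S => halfGraph.eq_pair_of_isOddIndepSet⟩
  · refine IsLeast.csInf_eq ⟨⟨_, halfGraph.isStrongOddColoring_strongOddColoring⟩, ?_⟩
    rintro m ⟨c, hc⟩
    exact halfGraph.succ_le_of_isStrongOddColoring (by omega) hc
  · have h01 : (⟨0, by omega⟩ : Fin n) < ⟨1, hn⟩ := Fin.mk_lt_mk.mpr zero_lt_one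
    refine IsGreatest.csSup_eq ⟨⟨_, halfGraph.isOddIndepSet_pair h01, card_pair (by simp)⟩, ?_⟩
    rintro k ⟨S, hS, rfl⟩
    by_contra! hk
    obtain ⟨i, j, -, rfl⟩ := halfGraph.eq_pair_of_isOddIndepSet hS (by omega)
    exact hk.not_ge card_le_two
end

section
/- For all integers p, q ≥ 1, the Cartesian product H = K_p □ K_q of two complete graphs satisfies αod(H) = 1 and χso(H) = p·q. -/
/-! Color classes of a strong odd coloring are odd independent sets, so both claims follow once
every odd independent set of the rook graph `K_p □ K_q` has at most one vertex. If `a ≠ b` lie in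
an independent set `S` of the rook graph, they share no coordinate, and the vertex `(a.1, b.2)`
lies outside `S` with exactly the two neighbours `a` and `b` in `S`: a nonzero even number. -/

open Finset

instance boxProdDecidableRel
    {α β : Type*} [DecidableEq α] [DecidableEq β]
    (G : SimpleGraph α) (H : SimpleGraph β)
    [DecidableRel G.Adj] [DecidableRel H.Adj] :
    DecidableRel (G.boxProd H).Adj := fun x y =>
  inferInstanceAs (Decidable (G.Adj x.1 y.1 ∧ x.2 = y.2 ∨ H.Adj x.2 y.2 ∧ x.1 = y.1))

open SimpleGraph

lemma Finset.eq_empty_or_odd_card_of_card_le_one_s16 {ι : Type*} {s : Finset ι} (hs : s.card ≤ 1) :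
    s = ∅ ∨ Odd s.card := by
  rcases Nat.le_one_iff_eq_zero_or_eq_one.mp hs with h | h
  · exact .inl (card_eq_zero.mp h)
  · exact .inr (h ▸ odd_one)

section OddIndependence

variable {V : Type*} {G : SimpleGraph V} [DecidableRel G.Adj]

lemma isOddIndepSet_singleton (x : V) : IsOddIndepSet G {x} := by
  refine ⟨?_, fun v _ => eq_empty_or_odd_card_of_card_le_one_s16 ?_⟩
  · simp only [mem_singleton]
    rintro u rfl v rfl
    exact G.irrefl
  · exact (card_filter_le _ _).trans (card_singleton x).le

lemma oddIndepNum_eq_one [Nonempty V] (h : ∀ S, IsOddIndepSet G S → S.card ≤ 1) :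
    oddIndepNum G = 1 := by
  have hmem : 1 ∈ {k | ∃ S, IsOddIndepSet G S ∧ S.card = k} :=
    ⟨{Classical.arbitrary V}, isOddIndepSet_singleton _, card_singleton _⟩
  have hbdd : ∀ k ∈ {k | ∃ S, IsOddIndepSet G S ∧ S.card = k}, k ≤ 1 := by
    rintro k ⟨S, hS, rfl⟩
    exact h S hS
  exact le_antisymm (csSup_le ⟨1, hmem⟩ hbdd) (le_csSup ⟨1, hbdd⟩ hmem)

lemma isStrongOddColoring_of_injective [Fintype V] {n : ℕ} {c : V → Fin n}
    (hc : Function.Injective c) :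
    IsStrongOddColoring G c := by
  refine ⟨fun u v huv => hc.ne huv.ne, fun v k => eq_empty_or_odd_card_of_card_le_one_s16 ?_⟩
  refine card_le_one.mpr fun a ha b hb => hc ?_
  simp only [mem_filter] at ha hb
  exact ha.2.2.trans hb.2.2.symm

lemma IsStrongOddColoring.isOddIndepSet_colorClass [Fintype V] {n : ℕ} {c : V → Fin n}
    (hc : IsStrongOddColoring G c) (k : Fin n) :
    IsOddIndepSet G (univ.filter fun u => c u = k) := by
  refine ⟨?_, fun v _ => ?_⟩
  · simp only [mem_filter, mem_univ, true_and]
    rintro u rfl v hv huv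
    exact hc.1 u v huv hv.symm
  · simpa only [filter_filter, and_comm] using hc.2 v k

lemma strongOddChromNum_eq_card [Fintype V]
    (h : ∀ (n : ℕ) (c : V → Fin n), IsStrongOddColoring G c → Function.Injective c) :
    strongOddChromNum G = Fintype.card V := by
  have hmem : Fintype.card V ∈ {n | ∃ c : V → Fin n, IsStrongOddColoring G c} :=
    ⟨Fintype.equivFin V, isStrongOddColoring_of_injective (Fintype.equivFin V).injective⟩
  refine le_antisymm (Nat.sInf_le hmem) (le_csInf ⟨_, hmem⟩ ?_)
  rintro n ⟨c, hc⟩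
  simpa using Fintype.card_le_of_injective c (h n c hc)

end OddIndependence

section RookGraph

variable {α β : Type*} {S : Finset (α × β)}

lemma boxProd_top_adj {x y : α × β} :
    ((⊤ : SimpleGraph α) □ (⊤ : SimpleGraph β)).Adj x y ↔
      x.1 ≠ y.1 ∧ x.2 = y.2 ∨ x.2 ≠ y.2 ∧ x.1 = y.1 := by
  simp only [boxProd_adj, top_adj]

lemma eq_of_fst_eq_of_indep
    (hS : ∀ u ∈ S, ∀ v ∈ S, ¬ ((⊤ : SimpleGraph α) □ (⊤ : SimpleGraph β)).Adj u v)
    {x y : α × β} (hx : x ∈ S) (hy : y ∈ S) (h : x.1 = y.1) : x = y := by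
  by_contra hxy
  exact hS x hx y hy (boxProd_top_adj.mpr (.inr ⟨fun h₂ => hxy (Prod.ext h h₂), h⟩))

lemma eq_of_snd_eq_of_indep
    (hS : ∀ u ∈ S, ∀ v ∈ S, ¬ ((⊤ : SimpleGraph α) □ (⊤ : SimpleGraph β)).Adj u v)
    {x y : α × β} (hx : x ∈ S) (hy : y ∈ S) (h : x.2 = y.2) : x = y := by
  by_contra hxy
  exact hS x hx y hy (boxProd_top_adj.mpr (.inl ⟨fun h₁ => hxy (Prod.ext h₁ h), h⟩))

variable [DecidableEq α] [DecidableEq β]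

lemma IsOddIndepSet.card_le_one_boxProd_top
    (hS : IsOddIndepSet ((⊤ : SimpleGraph α) □ (⊤ : SimpleGraph β)) S) : S.card ≤ 1 := by
  by_contra! hcard
  obtain ⟨a, ha, b, hb, hab⟩ := one_lt_card.mp hcard
  have hfst : a.1 ≠ b.1 := fun h => hab (eq_of_fst_eq_of_indep hS.1 ha hb h)
  have hsnd : a.2 ≠ b.2 := fun h => hab (eq_of_snd_eq_of_indep hS.1 ha hb h)
  have hwa : ((⊤ : SimpleGraph α) □ (⊤ : SimpleGraph β)).Adj (a.1, b.2) a :=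
    boxProd_top_adj.mpr (.inr ⟨hsnd.symm, rfl⟩)
  have hwb : ((⊤ : SimpleGraph α) □ (⊤ : SimpleGraph β)).Adj (a.1, b.2) b :=
    boxProd_top_adj.mpr (.inl ⟨hfst, rfl⟩)
  have hneighbours :
      (S.filter fun u => ((⊤ : SimpleGraph α) □ (⊤ : SimpleGraph β)).Adj (a.1, b.2) u) =
        {a, b} := by
    ext x
    simp only [mem_filter, mem_insert, mem_singleton]
    constructor
    · rintro ⟨hx, hadj⟩
      rcases boxProd_top_adj.mp hadj with ⟨-, h⟩ | ⟨-, h⟩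
      · exact .inr (eq_of_snd_eq_of_indep hS.1 hx hb h.symm)
      · exact .inl (eq_of_fst_eq_of_indep hS.1 hx ha h.symm)
    · rintro (rfl | rfl)
      exacts [⟨ha, hwa⟩, ⟨hb, hwb⟩]
  have hw : (a.1, b.2) ∉ S := fun hw => hS.1 _ hw a ha hwa
  rcases hS.2 _ hw with h | h <;> rw [hneighbours] at h
  · simp at h
  · rw [card_pair hab] at h
    exact Nat.not_odd_iff_even.mpr even_two h

lemma IsStrongOddColoring.injective_boxProd_top [Fintype α] [Fintype β] {n : ℕ}
    {c : α × β → Fin n}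
    (hc : IsStrongOddColoring ((⊤ : SimpleGraph α) □ (⊤ : SimpleGraph β)) c) :
    Function.Injective c := fun a b hab =>
  card_le_one.mp (hc.isOddIndepSet_colorClass (c a)).card_le_one_boxProd_top a
    (by simp) b (by simp [hab])

end RookGraph

/-- For all `p, q ≥ 1`, the Cartesian product `H = K_p □ K_q` satisfies
`αod(H) = 1` and `χso(H) = p·q`. -/
theorem oddIndepNum_boxProd_complete (p q : ℕ) (hp : 1 ≤ p) (hq : 1 ≤ q) :
    oddIndepNum ((⊤ : SimpleGraph (Fin p)).boxProd (⊤ : SimpleGraph (Fin q))) = 1 ∧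
    strongOddChromNum ((⊤ : SimpleGraph (Fin p)).boxProd (⊤ : SimpleGraph (Fin q))) = p * q := by
  have : Nonempty (Fin p × Fin q) := ⟨(⟨0, hp⟩, ⟨0, hq⟩)⟩
  refine ⟨oddIndepNum_eq_one fun S hS => hS.card_le_one_boxProd_top, ?_⟩
  rw [strongOddChromNum_eq_card fun n c hc => hc.injective_boxProd_top]
  simp
end
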